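/- The identity matrix I_n is an order unit for the cone Σ²Mat_n(ℝG) of sums of hermitian squares: for every *-invariant matrix M ∈ Mat_n(ℝG), the matrix M + ‖M‖₁ I_n is a sum of hermitian squares in Mat_n(ℝG). -/

import Mathlib

/-- The group-ring involution on `ℝG` determined by `g ↦ g⁻¹`. -/
noncomputable def gstar {G : Type*} [Group G] (x : MonoidAlgebra ℝ G) : MonoidAlgebra ℝ G :=
  MonoidAlgebra.ofCoeff (Finsupp.equivMapDomain (Equiv.inv G) x.coeff)

section GroupRingStar
variable {G : Type*} [Group G]

lemma gstar_single (g : G) (a : ℝ) :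
    gstar (MonoidAlgebra.single g a) = MonoidAlgebra.single g⁻¹ a := by
  simp [gstar, ← MonoidAlgebra.ofCoeff_single, Finsupp.equivMapDomain_single]

lemma gstar_add (x y : MonoidAlgebra ℝ G) : gstar (x + y) = gstar x + gstar y :=
  congrArg MonoidAlgebra.ofCoeff (map_add (Finsupp.domCongr (M := ℝ) (Equiv.inv G)) x.coeff y.coeff)

lemma gstar_zero : gstar (0 : MonoidAlgebra ℝ G) = 0 := by ext g; simp [gstar]

lemma gstar_gstar (x : MonoidAlgebra ℝ G) : gstar (gstar x) = x := by
  ext g; simp [gstar]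

lemma gstar_mul (x y : MonoidAlgebra ℝ G) : gstar (x * y) = gstar y * gstar x := by
  induction x using MonoidAlgebra.induction_linear with
  | zero => simp [gstar_zero]
  | add f g hf hg => rw [add_mul, gstar_add, hf, hg, gstar_add, mul_add]
  | single g a =>
    induction y using MonoidAlgebra.induction_linear with
    | zero => simp [gstar_zero]
    | add f g' hf hg => rw [mul_add, gstar_add, hf, hg, gstar_add, add_mul]
    | single h b =>
      rw [MonoidAlgebra.single_mul_single, gstar_single, gstar_single, gstar_single,
        MonoidAlgebra.single_mul_single, mul_inv_rev, mul_comm]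

/-- `ℝG` as a `*`-ring, with `star` induced by `g ↦ g⁻¹`. -/
noncomputable instance groupRingStar : StarRing (MonoidAlgebra ℝ G) where
  star := gstar
  star_involutive := gstar_gstar
  star_add := gstar_add
  star_mul := gstar_mul

lemma star_of (g : G) : star (MonoidAlgebra.of ℝ G g) = MonoidAlgebra.of ℝ G g⁻¹ := by
  show gstar _ = _
  simp [MonoidAlgebra.of_apply, gstar_single]

end GroupRingStar

/-- The `ℓ¹`-norm of an element of the group ring `ℝG`. -/
noncomputable def l1Norm {G : Type*} [Group G] (x : MonoidAlgebra ℝ G) : ℝ :=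
  ∑ g ∈ x.coeff.support, |x.coeff g|

/-- The `ℓ¹`-norm of a matrix over the group ring: the sum of the norms of entries. -/
noncomputable def matL1Norm {G : Type*} [Group G] {n : ℕ}
    (M : Matrix (Fin n) (Fin n) (MonoidAlgebra ℝ G)) : ℝ :=
  ∑ i, ∑ j, l1Norm (M i j)

/-- A matrix over `ℝG` is a sum of hermitian squares, i.e. lies in `Σ²Matₙ(ℝG)`. -/
def IsMatSOS {G : Type*} [Group G] {n : ℕ}
    (M : Matrix (Fin n) (Fin n) (MonoidAlgebra ℝ G)) : Prop :=
  ∃ (k : ℕ) (A : Fin k → Matrix (Fin n) (Fin n) (MonoidAlgebra ℝ G)),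
    M = ∑ i, star (A i) * A i

/-!
Because `M` is `*`-invariant, `2M = Σᵢⱼ (E_ij x_ij + E_ji x_ij*)` with `x_ij = M i j`, and
expanding each `x_ij` over `G` reduces the claim to the matrices `c (E_ij g + E_ji g⁻¹)`.
Each of these becomes a sum of hermitian squares once `2|c| Iₙ` is added: if `a² = b² = |c|` and
`ab = c`, then `(a E_ii + b E_ij g)* (a E_ii + b E_ij g)` provides `|c| (E_ii + E_jj)`, and the
projections `Iₙ - E_kk` provide the rest. Summing over `i, j` and `g` gives `2 (M + ‖M‖₁ Iₙ)`.
-/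

open Matrix

section GroupRing
variable {G : Type*} [Group G]

instance : StarModule ℝ (MonoidAlgebra ℝ G) where
  star_smul r x := by
    show gstar (r • x) = r • gstar x
    ext g
    simp [gstar]

lemma star_single (g : G) (a : ℝ) :
    star (MonoidAlgebra.single g a) = MonoidAlgebra.single g⁻¹ a :=
  gstar_single g a

end GroupRing

namespace IsMatSOS
variable {G : Type*} [Group G] {n : ℕ}

lemma star_mul_self (A : Matrix (Fin n) (Fin n) (MonoidAlgebra ℝ G)) :
    IsMatSOS (star A * A) :=
  ⟨1, fun _ => A, by simp⟩

lemma zero : IsMatSOS (0 : Matrix (Fin n) (Fin n) (MonoidAlgebra ℝ G)) :=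
  ⟨0, fun _ => 0, by simp⟩

lemma add {A B : Matrix (Fin n) (Fin n) (MonoidAlgebra ℝ G)} (hA : IsMatSOS A)
    (hB : IsMatSOS B) : IsMatSOS (A + B) := by
  obtain ⟨k, f, rfl⟩ := hA
  obtain ⟨l, g, rfl⟩ := hB
  exact ⟨k + l, Fin.append f g, by simp [Fin.sum_univ_add]⟩

lemma sum {ι : Type*} {s : Finset ι} {A : ι → Matrix (Fin n) (Fin n) (MonoidAlgebra ℝ G)}
    (h : ∀ i ∈ s, IsMatSOS (A i)) : IsMatSOS (∑ i ∈ s, A i) :=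
  Finset.sum_induction A IsMatSOS (fun _ _ => add) zero h

lemma smul {A : Matrix (Fin n) (Fin n) (MonoidAlgebra ℝ G)} (hA : IsMatSOS A) {t : ℝ}
    (ht : 0 ≤ t) : IsMatSOS (t • A) := by
  obtain ⟨k, f, rfl⟩ := hA
  refine ⟨k, fun i => √t • f i, ?_⟩
  simp_rw [star_smul, star_trivial, smul_mul_smul, Real.mul_self_sqrt ht, Finset.smul_sum]

end IsMatSOS

lemma Matrix.single_finsetSum {ι α m n : Type*} [DecidableEq m] [DecidableEq n]
    [AddCommMonoid α] (i : m) (j : n) (s : Finset ι) (f : ι → α) :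
    single i j (∑ k ∈ s, f k) = ∑ k ∈ s, single i j (f k) :=
  map_sum (singleAddMonoidHom i j) f s

section
variable {G : Type*} [Group G] {n : ℕ}

lemma isMatSOS_one_sub_single (k : Fin n) :
    IsMatSOS (1 - single k k (1 : MonoidAlgebra ℝ G)) := by
  convert IsMatSOS.star_mul_self (1 - single k k (1 : MonoidAlgebra ℝ G)) using 1
  simp [star_eq_conjTranspose, sub_mul, mul_sub, single_mul_single_same]

lemma isMatSOS_single_add_single_inv (i j : Fin n) (g : G) (c : ℝ) :
    IsMatSOS (single i j (MonoidAlgebra.single g c) + single j i (MonoidAlgebra.single g⁻¹ c)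
      + (2 * |c|) • (1 : Matrix (Fin n) (Fin n) (MonoidAlgebra ℝ G))) := by
  obtain ⟨a, b, haa, hbb, hab⟩ : ∃ a b : ℝ, a * a = |c| ∧ b * b = |c| ∧ a * b = c := by
    rcases le_total 0 c with hc | hc
    · exact ⟨√c, √c, by simp [Real.mul_self_sqrt hc, abs_of_nonneg hc]⟩
    · exact ⟨√(-c), -√(-c), by simp [Real.mul_self_sqrt (neg_nonneg.2 hc), abs_of_nonpos hc]⟩
  set A : Matrix (Fin n) (Fin n) (MonoidAlgebra ℝ G) :=
    single i i (MonoidAlgebra.single 1 a) + single i j (MonoidAlgebra.single g b)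
  have hA : star A * A = single i i (MonoidAlgebra.single 1 |c|)
      + single i j (MonoidAlgebra.single g c) + single j i (MonoidAlgebra.single g⁻¹ c)
      + single j j (MonoidAlgebra.single 1 |c|) := by
    simp only [A, star_add, star_eq_conjTranspose, conjTranspose_single, star_single, add_mul,
      mul_add, single_mul_single_same, MonoidAlgebra.single_mul_single, inv_one, one_mul, mul_one,
      inv_mul_cancel, haa, hbb, hab, mul_comm b a]
    abel
  convert ((IsMatSOS.star_mul_self A).add ((isMatSOS_one_sub_single i).smul (abs_nonneg c))).add
    ((isMatSOS_one_sub_single j).smul (abs_nonneg c)) using 1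
  rw [hA]
  simp only [smul_sub, smul_single, MonoidAlgebra.one_def, MonoidAlgebra.smul_single', mul_one]
  module

lemma isMatSOS_single_add_single_star (i j : Fin n) (x : MonoidAlgebra ℝ G) :
    IsMatSOS (single i j x + single j i (star x)
      + (2 * l1Norm x) • (1 : Matrix (Fin n) (Fin n) (MonoidAlgebra ℝ G))) := by
  have hx : x = ∑ g ∈ x.coeff.support, MonoidAlgebra.single g (x.coeff g) :=
    (MonoidAlgebra.sum_coeff_single x).symm
  convert IsMatSOS.sum fun g (_ : g ∈ x.coeff.support) =>
    isMatSOS_single_add_single_inv (n := n) i j g (x.coeff g) using 1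
  simp only [Finset.sum_add_distrib, ← Finset.sum_smul, ← Finset.mul_sum, ← star_single,
    ← star_sum, ← single_finsetSum, ← hx, l1Norm]

end

/-- the identity matrix is an order unit for `Σ²Matₙ(ℝG)`: for every
`*`-invariant `M`, the matrix `M + ‖M‖₁ Iₙ` is a sum of hermitian squares. -/
theorem statement5 {G : Type*} [Group G] {n : ℕ}
    (M : Matrix (Fin n) (Fin n) (MonoidAlgebra ℝ G)) (hM : star M = M) :
    IsMatSOS (M + matL1Norm M • (1 : Matrix (Fin n) (Fin n) (MonoidAlgebra ℝ G))) := by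
  have hstar (i j : Fin n) : star (M i j) = M j i := by rw [← star_apply, hM]
  have hdouble : (2 : ℝ) • (M + matL1Norm M • 1) = ∑ i, ∑ j,
      (single i j (M i j) + single j i (star (M i j)) + (2 * l1Norm (M i j)) • 1) := by
    simp only [Finset.sum_add_distrib, hstar, ← Finset.sum_smul, ← Finset.mul_sum]
    rw [Finset.sum_comm (f := fun i j => single j i (M j i)), ← matrix_eq_sum_single, matL1Norm]
    module
  have hhalf : M + matL1Norm M • 1 = (2⁻¹ : ℝ) • (2 : ℝ) • (M + matL1Norm M • 1) := by
    rw [inv_smul_smul₀ two_ne_zero]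
  rw [hhalf, hdouble]
  exact (IsMatSOS.sum fun i _ => IsMatSOS.sum fun j _ =>
    isMatSOS_single_add_single_star i j (M i j)).smul (by norm_num)
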